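/- The polynomial f = x⁴ + xy³ + y⁴ − 3x²yz − 4xy²z + 2x²z² + xz³ + yz³ + z⁴ ∈ ℚ[x,y,z] does not admit a rational SOS decomposition: there do not exist r ∈ ℕ and polynomials q₁,…,q_r ∈ ℚ[x,y,z] with f = Σ_{i=1}^r q_i². -/

import Mathlib

/-!
If `f = ∑ qᵢ²`, comparing top-degree parts shows that `f` is also the sum of the squares of the
quadratic forms `Hᵢ = (qᵢ)₂`. Let `t ≈ 2.11` be the real root of `t³ = 4t + 1` and `y = √t`. Then `f`
vanishes at the two real points `P(±y)`, where `P(y) = ((y³ + 1) / 2y, y, 1)`, hence so does every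
`Hᵢ`. For a rational quadratic form `H` one has `H(P(y)) + H(P(-y)) = α + β t + H(1,0,0) t²` with
`α, β ∈ ℚ`, and `1, t, t²` are linearly independent over `ℚ`; so `Hᵢ(1,0,0) = 0` for all `i`,
contradicting `∑ Hᵢ(1,0,0)² = f(1,0,0) = 1`.
-/

theorem Rat.pow_three_ne_four_mul_add_one (s : ℚ) : s ^ 3 ≠ 4 * s + 1 := by
  intro h
  have hint : s.num ^ 3 = (4 * s.num * s.den + (s.den : ℤ) ^ 2) * s.den := by
    have : (s.num : ℚ) ^ 3 = (4 * s.num * s.den + (s.den : ℚ) ^ 2) * s.den := by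
      rw [← Rat.mul_den_eq_num]; linear_combination (s.den : ℚ) ^ 3 * h
    exact_mod_cast this
  have hcop : IsCoprime (s.den : ℤ) (s.num ^ 3) :=
    (Int.isCoprime_iff_gcd_eq_one.mpr (Nat.coprime_comm.mp s.reduced)).pow_right
  have hden : s.den = 1 := by
    have := Int.isUnit_iff.mp (hcop.isUnit_of_dvd' dvd_rfl (Dvd.intro_left _ hint.symm))
    omega
  rw [hden, Nat.cast_one] at hint
  have hnum : IsUnit s.num := isUnit_of_dvd_one ⟨s.num ^ 2 - 4, by linear_combination -hint⟩
  rcases Int.isUnit_iff.mp hnum with h1 | h1 <;> rw [h1] at hint <;> norm_num at hint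

section CubicIrrational

open Polynomial

variable {K : Type*} [Field K] [CharZero K] {t : K}

theorem minpoly_eq_of_pow_three_eq (ht : t ^ 3 = 4 * t + 1) :
    minpoly ℚ t = X ^ 3 - C 4 * X - 1 := by
  refine (minpoly.eq_of_irreducible_of_monic ?_ ?_ ?_).symm
  · have hdeg : (X ^ 3 - C 4 * X - 1 : ℚ[X]).natDegree = 3 := by compute_degree!
    refine irreducible_of_degree_le_three_of_not_isRoot (by simp [hdeg]) fun s hs => ?_
    refine s.pow_three_ne_four_mul_add_one ?_
    simp only [IsRoot.def, eval_sub, eval_pow, eval_X, eval_mul, eval_C, eval_one] at hs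
    linear_combination hs
  · simp [ht]
  · monicity!

theorem eq_zero_of_add_mul_add_mul_sq_eq_zero (ht : t ^ 3 = 4 * t + 1) {a b c : ℚ}
    (h : a + b * t + c * t ^ 2 = 0) : a = 0 ∧ b = 0 ∧ c = 0 := by
  set p : ℚ[X] := C a + C b * X + C c * X ^ 2 with hp
  have hp0 : p = 0 := by
    by_contra hne
    have hdeg := minpoly.degree_le_of_ne_zero ℚ t hne (by simpa [p] using h)
    have h3 : (minpoly ℚ t).degree = 3 := by
      rw [minpoly_eq_of_pow_three_eq ht]; compute_degree!
    have h2 : p.degree ≤ 2 := by rw [hp]; compute_degree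
    exact absurd (h3 ▸ hdeg.trans h2) (by decide)
  refine ⟨?_, ?_, ?_⟩
  · simpa [p] using congrArg (coeff · 0) hp0
  · simpa [p] using congrArg (coeff · 1) hp0
  · simpa [p] using congrArg (coeff · 2) hp0

end CubicIrrational

open MvPolynomial
open scoped Pointwise

namespace MvPolynomial

variable {σ R : Type*}

theorem aeval_eq_zero_of_eq_sum_sq {S ι : Type*} [CommSemiring R] [CommRing S] [LinearOrder S]
    [IsStrictOrderedRing S] [Algebra R S] [Fintype ι] {F : MvPolynomial σ R}
    {q : ι → MvPolynomial σ R} (hFq : F = ∑ i, q i ^ 2) {w : σ → S} (hw : aeval w F = 0)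
    (i : ι) : aeval w (q i) = 0 := by
  have hsum : ∑ j, aeval w (q j) * aeval w (q j) = 0 := by
    simpa [hFq, sq] using hw
  exact (Finset.sum_mul_self_eq_zero_iff _ _).mp hsum i (Finset.mem_univ i)

theorem homogeneousComponent_two_mul_sq [CommSemiring R] {q : MvPolynomial σ R} {n : ℕ}
    (hq : q.totalDegree ≤ n) :
    homogeneousComponent (2 * n) (q ^ 2) = homogeneousComponent n q ^ 2 := by
  classical
  ext m
  rw [coeff_homogeneousComponent]
  split_ifs with hm
  · rw [sq, sq, coeff_mul, coeff_mul]
    refine Finset.sum_congr rfl fun uv huv => ?_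
    have hdeg : uv.1.degree + uv.2.degree = 2 * n := by
      rw [← hm, ← Finset.HasAntidiagonal.mem_antidiagonal.mp huv, map_add]
    have hzero : ∀ u : σ →₀ ℕ, n < u.degree → coeff u q = 0 := fun u hu =>
      coeff_eq_zero_of_totalDegree_lt (hq.trans_lt hu)
    simp only [coeff_homogeneousComponent]
    by_cases hu : uv.1.degree = n
    · by_cases hv : uv.2.degree = n
      · simp [hu, hv]
      · simp [hzero uv.2 (by omega)]
    · rcases lt_or_gt_of_ne hu with hu | hu
      · simp [hzero uv.2 (by omega)]
      · simp [hzero uv.1 hu]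
  · exact (((homogeneousComponent_isHomogeneous n q).pow 2).coeff_eq_zero (by omega)).symm

theorem totalDegree_lt_of_homogeneousComponent_eq_zero [CommSemiring R] {q : MvPolynomial σ R}
    {n : ℕ} (hq : q.totalDegree ≤ n) (h : homogeneousComponent n q = 0) (hn : 0 < n) :
    q.totalDegree < n := by
  rw [totalDegree, Finset.sup_lt_iff hn]
  intro m hm
  refine lt_of_le_of_ne ((le_totalDegree hm).trans hq) fun hmn => ?_
  have := congrArg (coeff m) h
  rw [coeff_homogeneousComponent, if_pos (by exact hmn), coeff_zero] at this
  exact (mem_support_iff.mp hm) this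

section OrderedField

variable [Field R] [LinearOrder R] [IsStrictOrderedRing R] {ι : Type*} [Fintype ι]

theorem eq_zero_of_sum_sq_eq_zero {q : ι → MvPolynomial σ R} (h : ∑ i, q i ^ 2 = 0) (i : ι) :
    q i = 0 :=
  MvPolynomial.funext fun x =>
    by simpa using aeval_eq_zero_of_eq_sum_sq h.symm (w := x) (map_zero _) i

theorem totalDegree_le_of_eq_sum_sq {F : MvPolynomial σ R} {n : ℕ}
    (hF : F.IsHomogeneous (2 * n)) {q : ι → MvPolynomial σ R} (hFq : F = ∑ i, q i ^ 2) (i : ι) :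
    (q i).totalDegree ≤ n := by
  set N := Finset.univ.sup fun j => (q j).totalDegree
  have hle : ∀ j, (q j).totalDegree ≤ N := fun j =>
    Finset.le_sup (f := fun j => (q j).totalDegree) (Finset.mem_univ j)
  suffices N ≤ n from (hle i).trans this
  by_contra! hnN
  have htop : ∑ j, homogeneousComponent N (q j) ^ 2 = 0 :=
    calc ∑ j, homogeneousComponent N (q j) ^ 2 = homogeneousComponent (2 * N) F := by
          simp only [hFq, map_sum, homogeneousComponent_two_mul_sq (hle _)]
      _ = 0 := homogeneousComponent_eq_zero _ _ (hF.totalDegree_le.trans_lt (by omega))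
  have hlt : ∀ j ∈ Finset.univ, (q j).totalDegree < N := fun j _ =>
    totalDegree_lt_of_homogeneousComponent_eq_zero (hle j) (eq_zero_of_sum_sq_eq_zero htop j)
      (by omega)
  exact lt_irrefl N ((Finset.sup_lt_iff (n.zero_le.trans_lt hnN)).mpr hlt)

theorem eq_sum_sq_homogeneousComponent {F : MvPolynomial σ R} {n : ℕ}
    (hF : F.IsHomogeneous (2 * n)) {q : ι → MvPolynomial σ R} (hFq : F = ∑ i, q i ^ 2) :
    F = ∑ i, homogeneousComponent n (q i) ^ 2 :=
  calc F = homogeneousComponent (2 * n) F := (homogeneousComponent_eq_self hF).symm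
    _ = ∑ i, homogeneousComponent n (q i) ^ 2 := by
      simp only [hFq, map_sum,
        homogeneousComponent_two_mul_sq (totalDegree_le_of_eq_sum_sq hF hFq _)]

end OrderedField

end MvPolynomial

noncomputable def scheidererPoly : MvPolynomial (Fin 3) ℚ :=
  (X 0) ^ 4 + (X 0) * (X 1) ^ 3 + (X 1) ^ 4 - 3 * (X 0) ^ 2 * (X 1) * (X 2)
    - 4 * (X 0) * (X 1) ^ 2 * (X 2) + 2 * (X 0) ^ 2 * (X 2) ^ 2
    + (X 0) * (X 2) ^ 3 + (X 1) * (X 2) ^ 3 + (X 2) ^ 4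

theorem isHomogeneous_scheidererPoly : scheidererPoly.IsHomogeneous 4 := by
  have hc : ∀ c : ℚ, (C c : MvPolynomial (Fin 3) ℚ).IsHomogeneous 0 := isHomogeneous_C _
  have hx := isHomogeneous_X ℚ (σ := Fin 3)
  have hp := isHomogeneous_X_pow (R := ℚ) (σ := Fin 3)
  unfold scheidererPoly
  simp only [← map_ofNat C]
  exact (((((((((hp 0 4).add ((hx 0).mul (hp 1 3))).add (hp 1 4)).sub
    ((((hc 3).mul (hp 0 2)).mul (hx 1)).mul (hx 2))).sub
    ((((hc 4).mul (hx 0)).mul (hp 1 2)).mul (hx 2))).add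
    (((hc 2).mul (hp 0 2)).mul (hp 2 2))).add ((hx 0).mul (hp 2 3))).add
    ((hx 1).mul (hp 2 3))).add (hp 2 4))

/-- `16 y⁴ f(P(y)) = (y⁶ - 4y² - 1)²`. -/
noncomputable def scheidererPoint (y : ℝ) : Fin 3 → ℝ := ![(y ^ 3 + 1) / (2 * y), y, 1]

theorem aeval_scheidererPoint {y : ℝ} (hy : y ^ 6 = 4 * y ^ 2 + 1) :
    aeval (scheidererPoint y) scheidererPoly = 0 := by
  have hy0 : y ≠ 0 := by rintro rfl; norm_num at hy
  simp only [scheidererPoint, scheidererPoly, map_add, map_sub, map_mul, map_pow, aeval_X,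
    aeval_ofNat, Matrix.cons_val_zero, Matrix.cons_val_one, Matrix.cons_val, mul_one, one_pow]
  field_simp
  linear_combination (y ^ 6 - 4 * y ^ 2 - 1) * hy

theorem exists_pow_six_eq_four_mul_sq_add_one : ∃ y : ℝ, y ^ 6 = 4 * y ^ 2 + 1 := by
  have hf : ContinuousOn (fun y : ℝ => y ^ 6 - 4 * y ^ 2 - 1) (Set.Icc 1 2) := by fun_prop
  obtain ⟨y, -, hy⟩ := intermediate_value_Icc (by norm_num) hf
    (show (0 : ℝ) ∈ Set.Icc _ _ by norm_num)
  exact ⟨y, by linear_combination hy⟩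

theorem exists_aeval_add_aeval_eq {u v y : ℝ} (hsum : u + v = y ^ 2) (hprod : u * v = 1)
    (hdiff : y * (u - v) = 1) {H : MvPolynomial (Fin 3) ℚ} (hH : H.IsHomogeneous 2) :
    ∃ α β : ℚ, aeval ![u, y, 1] H + aeval ![v, -y, 1] H =
      α + β * y ^ 2 + (eval ![1, 0, 0] H : ℚ) * (y ^ 2) ^ 2 := by
  have hmem : H ∈ Submodule.span ℚ (Set.range X * Set.range X) := by
    rw [← Submodule.span_mul_span, ← homogeneousSubmodule_one_eq_span_X, ← sq,
      homogeneousSubmodule_one_pow]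
    exact hH
  clear hH
  induction hmem using Submodule.span_induction with
  | mem p hp =>
    obtain ⟨_, ⟨i, rfl⟩, _, ⟨j, rfl⟩, rfl⟩ := Set.mem_mul.mp hp
    fin_cases i <;> fin_cases j <;>
      simp only [Fin.isValue, Fin.zero_eta, Fin.mk_one, Fin.reduceFinMk, map_mul, aeval_X, eval_X,
        Matrix.cons_val, Matrix.cons_val_zero, Matrix.cons_val_one]
    · exact ⟨-2, 0, by push_cast; linear_combination (u + v + y ^ 2) * hsum - 2 * hprod⟩
    · exact ⟨1, 0, by push_cast; linear_combination hdiff⟩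
    · exact ⟨0, 1, by push_cast; linear_combination hsum⟩
    · exact ⟨1, 0, by push_cast; linear_combination hdiff⟩
    · exact ⟨0, 2, by push_cast; ring⟩
    · exact ⟨0, 0, by push_cast; ring⟩
    · exact ⟨0, 1, by push_cast; linear_combination hsum⟩
    · exact ⟨0, 0, by push_cast; ring⟩
    · exact ⟨2, 0, by push_cast; ring⟩
  | zero => exact ⟨0, 0, by simp⟩
  | add p q _ _ hp hq =>
    obtain ⟨α₁, β₁, h₁⟩ := hp
    obtain ⟨α₂, β₂, h₂⟩ := hq
    exact ⟨α₁ + α₂, β₁ + β₂, by simp only [map_add]; push_cast; linear_combination h₁ + h₂⟩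
  | smul c p _ hp =>
    obtain ⟨α, β, h⟩ := hp
    refine ⟨c * α, c * β, ?_⟩
    simp only [map_smul, smul_eval, Rat.smul_def]
    push_cast
    linear_combination (c : ℝ) * h

theorem eval_eq_zero_of_aeval_scheidererPoint_eq_zero {y : ℝ} (hy : y ^ 6 = 4 * y ^ 2 + 1)
    {H : MvPolynomial (Fin 3) ℚ} (hH : H.IsHomogeneous 2)
    (h₁ : aeval (scheidererPoint y) H = 0) (h₂ : aeval (scheidererPoint (-y)) H = 0) :
    eval ![1, 0, 0] H = 0 := by
  have hy0 : y ≠ 0 := by rintro rfl; norm_num at hy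
  obtain ⟨α, β, h⟩ := exists_aeval_add_aeval_eq (u := (y ^ 3 + 1) / (2 * y))
    (v := ((-y) ^ 3 + 1) / (2 * -y)) (by field_simp; ring)
    (by field_simp; linear_combination hy) (by field_simp; ring) hH
  unfold scheidererPoint at h₁ h₂
  exact (eq_zero_of_add_mul_add_mul_sq_eq_zero (t := y ^ 2) (a := α) (b := β)
    (c := eval ![1, 0, 0] H) (by linear_combination hy)
    (by linear_combination h₁ + h₂ - h)).2.2

theorem scheiderer_example_not_rational_sos :
    ¬ ∃ (r : ℕ) (q : Fin r → MvPolynomial (Fin 3) ℚ),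
      ((X 0) ^ 4 + (X 0) * (X 1) ^ 3 + (X 1) ^ 4 - 3 * (X 0) ^ 2 * (X 1) * (X 2)
        - 4 * (X 0) * (X 1) ^ 2 * (X 2) + 2 * (X 0) ^ 2 * (X 2) ^ 2
        + (X 0) * (X 2) ^ 3 + (X 1) * (X 2) ^ 3 + (X 2) ^ 4 : MvPolynomial (Fin 3) ℚ)
        = ∑ i, (q i) ^ 2 := by
  rintro ⟨r, q, hq⟩
  set H := fun i => homogeneousComponent 2 (q i)
  have hH : scheidererPoly = ∑ i, H i ^ 2 :=
    eq_sum_sq_homogeneousComponent (n := 2) isHomogeneous_scheidererPoly hq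
  obtain ⟨y, hy⟩ := exists_pow_six_eq_four_mul_sq_add_one
  have hvanish : ∀ i, eval ![1, 0, 0] (H i) = 0 := fun i =>
    eval_eq_zero_of_aeval_scheidererPoint_eq_zero hy (homogeneousComponent_isHomogeneous 2 _)
      (aeval_eq_zero_of_eq_sum_sq hH (aeval_scheidererPoint hy) i)
      (aeval_eq_zero_of_eq_sum_sq hH (aeval_scheidererPoint (by linear_combination hy)) i)
  have h := congrArg (eval ![1, 0, 0]) hH
  simp [scheidererPoly, hvanish] at h
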